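/- For every n ≥ 3 and every index 0 ≤ i < n, the subspace 𝕊¹_n − {y_i} is open in 𝕊¹_n and is contractible. -/

import Mathlib

/-!
Removing `y_i` cuts the circle open into the fence
`x_i < y_{i+1} > x_{i+1} < y_{i+2} > ⋯ < y_{i-1} > x_{i-1}`, whose points sit at positions
`0, …, 2n - 2`. Retracting the fence onto its first `m + 1` points (everything beyond position `m`
goes to the `m`-th point) is continuous, and two consecutive retractions are pointwise comparable
in the specialization order, hence homotopic. The retraction at `2n - 2` is the identity and the
one at `0` is constant.
-/

open Set

/-- The underlying set of the finite model `𝕊¹_n` of the circle (`2n` points):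
`Sum.inl i` is `x_i` and `Sum.inr i` is `y_i`. -/
def SCirc (n : ℕ) : Type := Fin n ⊕ Fin n

namespace SCirc

/-- The minimal point `x_i` of `𝕊¹_n`. -/
def x {n : ℕ} (i : Fin n) : SCirc n := Sum.inl i

/-- The maximal point `y_i` of `𝕊¹_n`. -/
def y {n : ℕ} (i : Fin n) : SCirc n := Sum.inr i

/-- The partial order on `𝕊¹_n` generated by `x_i < y_i` and `x_{(i-1) mod n} < y_i`. -/
def le {n : ℕ} : SCirc n → SCirc n → Prop
  | Sum.inl i, Sum.inl j => i = j
  | Sum.inr i, Sum.inr j => i = j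
  | Sum.inl i, Sum.inr j => i = j ∨ (i : ℕ) = ((j : ℕ) + n - 1) % n
  | Sum.inr _, Sum.inl _ => False

/-- The Alexandrov topology on `𝕊¹_n`: open sets are down-sets.  The minimal open
neighbourhoods are `x_i^↓ = {x_i}` and `y_i^↓ = {y_i, x_i, x_{(i-1) mod n}}`. -/
instance (n : ℕ) : TopologicalSpace (SCirc n) where
  IsOpen U := ∀ a ∈ U, ∀ b, SCirc.le b a → b ∈ U
  isOpen_univ := fun _ _ _ _ => trivial
  isOpen_inter := fun _ _ hU hV a ha b hba => ⟨hU a ha.1 b hba, hV a ha.2 b hba⟩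
  isOpen_sUnion := fun S hS a ha b hba => by
    obtain ⟨U, hUS, haU⟩ := ha
    exact ⟨U, hUS, hS U hUS a haU b hba⟩

end SCirc

open Topology

section Specialization

variable {X Y : Type*} [TopologicalSpace X] [TopologicalSpace Y]

theorem continuous_of_forall_specializes [AlexandrovDiscrete X] {f : X → Y}
    (hf : ∀ x y, x ⤳ y → f x ⤳ f y) : Continuous f :=
  continuous_def.2 fun _U hU ↦ isOpen_iff_forall_specializes.2 fun x y hxy hy ↦
    (hf x y hxy).mem_open hU hy

open Classical in
/-- The homotopy is `f` before time `1` and `g` at time `1`; it is continuous because every open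
set containing `g x` also contains `f x`. -/
theorem ContinuousMap.Homotopic.of_forall_specializes {f g : C(X, Y)}
    (h : ∀ x, f x ⤳ g x) : f.Homotopic g :=
  ⟨{ toFun := (Prod.fst ⁻¹' {1}ᶜ : Set (unitInterval × X)).piecewise (f ∘ Prod.snd) (g ∘ Prod.snd)
     continuous_toFun :=
      (isOpen_compl_singleton.preimage continuous_fst).continuous_piecewise_of_specializes
        (by fun_prop) (by fun_prop) fun q ↦ h q.2
     map_zero_left := fun x ↦ by simp
     map_one_left := fun x ↦ by simp }⟩

end Specialization

section Fence

variable {X : Type*} [TopologicalSpace X] [AlexandrovDiscrete X] {p : ℕ → X} {ι : X → ℕ}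

theorem continuous_comp_min_of_fence (hp : ∀ x, p (ι x) = x)
    (hι : ∀ x y, x ⤳ y → ι x ≤ ι y + 1 ∧ ι y ≤ ι x + 1) (m : ℕ) :
    Continuous fun x ↦ p (min (ι x) m) := by
  refine continuous_of_forall_specializes fun x y hxy ↦ ?_
  obtain ⟨hxy₁, hxy₂⟩ := hι x y hxy
  rcases le_or_gt (ι x) m with hx | hx <;> rcases le_or_gt (ι y) m with hy | hy
  · rwa [min_eq_left hx, min_eq_left hy, hp, hp]
  · rw [min_eq_left hx, min_eq_right hy.le, show ι x = m by omega]
  · rw [min_eq_right hx.le, min_eq_left hy, show ι y = m by omega]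
  · rw [min_eq_right hx.le, min_eq_right hy.le]

theorem ContractibleSpace.of_fence (N : ℕ) (hp : ∀ x, p (ι x) = x) (hN : ∀ x, ι x ≤ N)
    (hstep : ∀ k < N, p k ⤳ p (k + 1) ∨ p (k + 1) ⤳ p k)
    (hι : ∀ x y, x ⤳ y → ι x ≤ ι y + 1 ∧ ι y ≤ ι x + 1) : ContractibleSpace X := by
  let r (m : ℕ) : C(X, X) := ⟨_, continuous_comp_min_of_fence hp hι m⟩
  have hr_of_le {m : ℕ} {x : X} (hx : ι x ≤ m) : r m x = x :=
    (congrArg p (min_eq_left hx)).trans (hp x)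
  have hr_of_ge {m : ℕ} {x : X} (hx : m ≤ ι x) : r m x = p m := congrArg p (min_eq_right hx)
  have hr_succ_rel (m : ℕ) (R : X → X → Prop) (hR : ∀ x, R x x) (h : R (p m) (p (m + 1)))
      (x : X) : R (r m x) (r (m + 1) x) := by
    rcases le_or_gt (ι x) m with hx | hx
    · rw [hr_of_le hx, hr_of_le (by omega)]
      exact hR x
    · rwa [hr_of_ge hx.le, hr_of_ge hx]
  have hr_succ (m : ℕ) (hm : m < N) : (r m).Homotopic (r (m + 1)) := by
    rcases hstep m hm with h | h
    · exact .of_forall_specializes (hr_succ_rel m (· ⤳ ·) specializes_refl h)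
    · exact .symm <| .of_forall_specializes (hr_succ_rel m (fun a b ↦ b ⤳ a) specializes_refl h)
  have hr_zero : r 0 = .const X (p 0) := by ext x; exact hr_of_ge (Nat.zero_le _)
  have hr_N : r N = .id X := by ext x; exact hr_of_le (hN x)
  have hchain (m : ℕ) (hm : m ≤ N) : (r 0).Homotopic (r m) := by
    induction m with
    | zero => rfl
    | succ m ih => exact (ih (by omega)).trans (hr_succ m (by omega))
  rw [contractible_iff_id_nullhomotopic]
  exact ⟨p 0, hr_N ▸ hr_zero ▸ (hchain N le_rfl).symm⟩

end Fence

namespace SCirc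

open Fin.CommRing

variable {n : ℕ}

instance : Finite (SCirc n) := inferInstanceAs (Finite (Fin n ⊕ Fin n))

theorem le_trans : ∀ {a b c : SCirc n}, le a b → le b c → le a c
  | Sum.inl _, Sum.inl _, _, rfl, h => h
  | Sum.inr _, Sum.inr _, _, rfl, h => h
  | Sum.inl _, Sum.inr _, Sum.inr _, h, rfl => h

theorem specializes_iff_le {a b : SCirc n} : a ⤳ b ↔ le a b := by
  refine ⟨fun h ↦ h.mem_open (s := {c | le c b}) (fun c hc d hdc ↦ le_trans hdc hc) ?_,
    fun h ↦ specializes_iff_forall_open.2 fun U hU hb ↦ hU b hb a h⟩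
  rcases b with b | b <;> rfl

theorem isOpen_compl_y (i : Fin n) : IsOpen ({y i}ᶜ : Set (SCirc n)) := by
  intro a ha b hba (hb : b = y i)
  subst hb
  rcases a with a | a
  exacts [hba.elim, ha (congrArg Sum.inr hba.symm)]

def fenceIndex (i : Fin n) : SCirc n → ℕ
  | Sum.inl j => 2 * (j - i : Fin n).val
  | Sum.inr j => 2 * (j - i : Fin n).val - 1 -- truncated only at `y i`, which is not on the fence

theorem fenceIndex_le (i : Fin n) (a : SCirc n) : fenceIndex i a ≤ 2 * n - 2 := by
  rcases a with j | j <;> simp only [fenceIndex] <;> have := (j - i).isLt <;> omega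

variable [NeZero n]

theorem x_le_y_iff {p q : Fin n} : le (x p) (y q) ↔ p = q ∨ p = q - 1 := by
  have : q - 1 = (((q : ℕ) + n - 1 : ℕ) : Fin n) := by
    rw [Nat.cast_sub (by have := NeZero.pos n; omega)]; simp
  rw [this, Fin.ext_iff (b := ((_ : ℕ) : Fin n)), Fin.val_natCast]
  rfl

def fencePoint (i : Fin n) (k : ℕ) : SCirc n :=
  if Even k then x (i + (k / 2 : ℕ)) else y (i + (k / 2 : ℕ) + 1)

theorem fencePoint_two_mul (i : Fin n) (m : ℕ) : fencePoint i (2 * m) = x (i + (m : Fin n)) := by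
  simp [fencePoint]

theorem fencePoint_two_mul_add_one (i : Fin n) (m : ℕ) :
    fencePoint i (2 * m + 1) = y (i + (m : Fin n) + 1) := by
  simp [fencePoint, Nat.add_div_of_dvd_right]

theorem fencePoint_ne_y {i : Fin n} {k : ℕ} (hk : k ≤ 2 * n - 2) : fencePoint i k ≠ y i := by
  obtain ⟨m, rfl | rfl⟩ := Nat.even_or_odd' k
  · rw [fencePoint_two_mul]; exact Sum.inl_ne_inr
  · rw [fencePoint_two_mul_add_one]
    intro h
    have : ((m + 1 : ℕ) : Fin n) = 0 := by
      push_cast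
      exact add_eq_left.1 ((add_assoc _ _ _).symm.trans (Sum.inr.inj h))
    have := Nat.le_of_dvd m.succ_pos (Fin.natCast_eq_zero.1 this)
    omega

theorem fencePoint_fenceIndex {i : Fin n} {a : SCirc n} (ha : a ≠ y i) :
    fencePoint i (fenceIndex i a) = a := by
  rcases a with j | j
  · change fencePoint i (2 * (j - i).val) = x j
    rw [fencePoint_two_mul, Fin.cast_val_eq_self, add_sub_cancel]
  · have hji : j - i ≠ 0 := sub_ne_zero.2 fun h ↦ ha (congrArg Sum.inr h)
    obtain ⟨d, hd⟩ := Nat.exists_eq_add_one_of_ne_zero (Fin.val_ne_zero_iff.2 hji)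
    have hcast : ((d + 1 : ℕ) : Fin n) = j - i := hd ▸ Fin.cast_val_eq_self _
    change fencePoint i (2 * (j - i).val - 1) = y j
    rw [hd, show 2 * (d + 1) - 1 = 2 * d + 1 by omega, fencePoint_two_mul_add_one, add_assoc]
    push_cast at hcast
    rw [hcast, add_sub_cancel]

theorem fencePoint_le_succ_or (i : Fin n) (k : ℕ) :
    le (fencePoint i k) (fencePoint i (k + 1)) ∨ le (fencePoint i (k + 1)) (fencePoint i k) := by
  obtain ⟨m, rfl | rfl⟩ := Nat.even_or_odd' k
  · left
    rw [fencePoint_two_mul, fencePoint_two_mul_add_one, x_le_y_iff]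
    simp
  · right
    rw [show 2 * m + 1 + 1 = 2 * (m + 1) by ring, fencePoint_two_mul, fencePoint_two_mul_add_one,
      x_le_y_iff]
    simp [add_assoc]

theorem fenceIndex_le_add_one {i : Fin n} {a b : SCirc n} (hab : le a b) (hb : b ≠ y i) :
    fenceIndex i a ≤ fenceIndex i b + 1 ∧ fenceIndex i b ≤ fenceIndex i a + 1 := by
  rcases a with p | p <;> rcases b with q | q
  · obtain rfl : p = q := hab
    omega
  · have hqi : q - i ≠ 0 := sub_ne_zero.2 fun h ↦ hb (congrArg Sum.inr h)
    have := Fin.val_ne_zero_iff.2 hqi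
    change 2 * (p - i).val ≤ 2 * (q - i).val - 1 + 1 ∧ 2 * (q - i).val - 1 ≤ 2 * (p - i).val + 1
    rcases x_le_y_iff.1 hab with rfl | rfl
    · omega
    · rw [sub_right_comm, Fin.val_sub_one_of_ne_zero hqi]
      omega
  · exact hab.elim
  · obtain rfl : p = q := hab
    omega

theorem contractibleSpace_compl_y (i : Fin n) : ContractibleSpace ({y i}ᶜ : Set (SCirc n)) :=
  ContractibleSpace.of_fence (2 * n - 2)
    -- clamped at the end of the fence, so that it never reaches `y i`
    (p := fun k ↦ ⟨fencePoint i (min k (2 * n - 2)), fencePoint_ne_y (min_le_right _ _)⟩)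
    (ι := fun a ↦ fenceIndex i a)
    (fun a ↦ Subtype.ext <| by
      simp only [min_eq_left (fenceIndex_le i a), fencePoint_fenceIndex a.2])
    (fun a ↦ fenceIndex_le i a)
    (fun k hk ↦ by
      simp only [subtype_specializes_iff, specializes_iff_le, min_eq_left hk.le,
        min_eq_left (Nat.succ_le_of_lt hk)]
      exact fencePoint_le_succ_or i k)
    (fun a b hab ↦
      fenceIndex_le_add_one (specializes_iff_le.1 ((subtype_specializes_iff a b).1 hab)) b.2)

end SCirc

theorem scirc_compl_y_isOpen_contractible_general (n : ℕ) (i : Fin n) :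
    IsOpen ({SCirc.y i}ᶜ : Set (SCirc n)) ∧
      ContractibleSpace ({SCirc.y i}ᶜ : Set (SCirc n)) :=
  have := i.neZero
  ⟨SCirc.isOpen_compl_y i, SCirc.contractibleSpace_compl_y i⟩

/-- For every `n ≥ 3` and every index `0 ≤ i < n`, the subspace
`𝕊¹_n − {y_i}` is open in `𝕊¹_n` and is contractible. -/
theorem scirc_compl_y_isOpen_contractible (n : ℕ) (hn : 3 ≤ n) (i : Fin n) :
    IsOpen ({SCirc.y i}ᶜ : Set (SCirc n)) ∧
      ContractibleSpace ({SCirc.y i}ᶜ : Set (SCirc n)) :=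
  scirc_compl_y_isOpen_contractible_general n i
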